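/- For every fixed R₀ with 0.7 ≤ R₀ ≤ 1, the function c ↦ ∫_{R₀}^{R⁺((√3/2)·c)} K(R)/(R·√(c² − K(R)²)) dR is strictly increasing on the interval [2/√3, e^{0.15325}]. -/

import Mathlib

open Real

noncomputable def K (R : ℝ) : ℝ := Real.exp ((R ^ 2 - 1) / 2) / R

/-!
Fix `c₁ < c₂` and let `a < b` be the upper limits `R⁺(√3 c₁ / 2)`, `R⁺(√3 c₂ / 2)`, both in
`[1, 1.105]`. Writing `F` for the integral and `g_c` for its integrand,
`F(c₂) - F(c₁) = ∫_a^b g_{c₂} - ∫_{R₀}^a (g_{c₁} - g_{c₂})`.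
On `[a, b]` we have `1 ≤ K < c₂` and `c₂² - K² ≤ 0.359`, so the gain is at least `1.51 (b - a)`.
The loss is controlled by `(√x)⁻¹ - (√y)⁻¹ ≤ (y - x) / (2 x √x)` together with upper bounds of `K`
on six subintervals of `[0.7, 1.105]`, which give `∫ (g_{c₁} - g_{c₂}) ≤ 2.5909 (c₂² - c₁²)`.
Since `K' ≤ 0.20351` on `[1, 1.105]`, `b - a ≥ (√3 / 2) (c₂ - c₁) / 0.20351`, so the gain is at
least `6.42 (c₂ - c₁)` while the loss is at most `6.04 (c₂ - c₁)`.
-/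

open Set

lemma K_pos {R : ℝ} (hR : 0 < R) : 0 < K R := div_pos (exp_pos _) hR

lemma K_one : K 1 = 1 := by simp [K]

lemma hasDerivAt_K {R : ℝ} (hR : R ≠ 0) : HasDerivAt K (K R * ((R ^ 2 - 1) / R)) R := by
  have hexp : HasDerivAt (fun R : ℝ => exp ((R ^ 2 - 1) / 2)) (exp ((R ^ 2 - 1) / 2) * R) R := by
    simpa using (((hasDerivAt_pow 2 R).sub_const 1).div_const 2).exp
  refine (hexp.fun_div (hasDerivAt_id' R) hR).congr_deriv ?_
  rw [K]
  field_simp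

lemma continuousOn_K {s : Set ℝ} (hs : ∀ R ∈ s, R ≠ 0) : ContinuousOn K s :=
  (continuous_exp.comp (by fun_prop)).continuousOn.div continuousOn_id hs

lemma strictMonoOn_K : StrictMonoOn K (Ici 1) := by
  refine strictMonoOn_of_deriv_pos (convex_Ici 1)
    (continuousOn_K fun R hR => (zero_lt_one.trans_le hR).ne') fun R hR => ?_
  rw [interior_Ici, mem_Ioi] at hR
  rw [(hasDerivAt_K (by positivity)).deriv]
  exact mul_pos (K_pos (by positivity)) (div_pos (by nlinarith) (by positivity))

lemma strictAntiOn_K : StrictAntiOn K (Ioc 0 1) := by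
  refine strictAntiOn_of_deriv_neg (convex_Ioc 0 1) (continuousOn_K fun R hR => hR.1.ne')
    fun R hR => ?_
  rw [interior_Ioc, mem_Ioo] at hR
  rw [(hasDerivAt_K hR.1.ne').deriv]
  exact mul_neg_of_pos_of_neg (K_pos hR.1) (div_neg_of_neg_of_pos (by nlinarith) hR.1)

lemma one_le_K_of_one_le {R : ℝ} (hR : 1 ≤ R) : 1 ≤ K R := by
  simpa [K_one] using strictMonoOn_K.monotoneOn (mem_Ici.2 le_rfl) (mem_Ici.2 hR) hR

lemma add_cubic_taylor_le_exp {t : ℝ} (ht : 0 ≤ t) :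
    1 + t + t ^ 2 / 2 + t ^ 3 / 6 ≤ exp t := by
  have h := sum_le_exp_of_nonneg ht 4
  norm_num [Finset.sum_range_succ, Nat.factorial] at h
  linarith

lemma K_le_of_le_one {p B : ℝ} (hp : 0 < p) (hp1 : p ≤ 1)
    (hB : 1 ≤ B * p * (1 + (1 - p ^ 2) / 2 + ((1 - p ^ 2) / 2) ^ 2 / 2
      + ((1 - p ^ 2) / 2) ^ 3 / 6)) :
    K p ≤ B := by
  set t := (1 - p ^ 2) / 2 with ht_def
  have ht : 0 ≤ t := by rw [ht_def]; nlinarith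
  have hexp : exp ((p ^ 2 - 1) / 2) * exp t = 1 := by
    rw [← exp_add, ht_def, ← add_div, sub_add_sub_cancel', sub_self, zero_div, exp_zero]
  have hBp : 0 < B * p := pos_of_mul_pos_left (one_pos.trans_le hB) (by positivity)
  have := mul_le_mul_of_nonneg_left (add_cubic_taylor_le_exp ht) hBp.le
  rw [K, div_le_iff₀ hp]
  by_contra! h
  nlinarith [mul_lt_mul_of_pos_right h (exp_pos t)]

lemma K_le_of_one_le {q B : ℝ} (hq : 1 ≤ q) (hq' : q ^ 2 ≤ 3)
    (hB : 1 ≤ B * q * (1 - (q ^ 2 - 1) / 2)) :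
    K q ≤ B := by
  set s := (q ^ 2 - 1) / 2 with hs_def
  have hexp : exp s * exp (-s) = 1 := by rw [← exp_add, add_neg_cancel, exp_zero]
  have hBq : 0 < B * q := pos_of_mul_pos_left (one_pos.trans_le hB) (by rw [hs_def]; linarith)
  have := mul_le_mul_of_nonneg_left (add_one_le_exp (-s)) hBq.le
  rw [K, div_le_iff₀ (by linarith)]
  by_contra! h
  nlinarith [mul_lt_mul_of_pos_right h (exp_pos (-s))]

lemma le_K_of_one_le {q L : ℝ} (hq : 1 ≤ q)
    (hL : L * q ≤ 1 + (q ^ 2 - 1) / 2 + ((q ^ 2 - 1) / 2) ^ 2 / 2 + ((q ^ 2 - 1) / 2) ^ 3 / 6) :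
    L ≤ K q := by
  have := add_cubic_taylor_le_exp (t := (q ^ 2 - 1) / 2) (by nlinarith)
  rw [K, le_div_iff₀ (by linarith)]
  linarith

noncomputable def polarAngleIntegrand (c R : ℝ) : ℝ := K R / (R * √(c ^ 2 - K R ^ 2))

lemma continuousOn_polarAngleIntegrand {c : ℝ} {s : Set ℝ}
    (hs : ∀ R ∈ s, 0 < R ∧ K R ^ 2 < c ^ 2) : ContinuousOn (polarAngleIntegrand c) s := by
  have hK : ContinuousOn K s := continuousOn_K fun R hR => (hs R hR).1.ne'
  refine hK.div (continuousOn_id.mul (continuous_sqrt.comp_continuousOn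
    (continuousOn_const.sub (hK.pow 2)))) fun R hR => ?_
  exact (mul_pos (hs R hR).1 (sqrt_pos.2 (sub_pos.2 (hs R hR).2))).ne'

lemma polarAngleIntegrand_antitone {c₁ c₂ R : ℝ} (hR : 0 < R) (hK : K R ^ 2 < c₁ ^ 2)
    (hc : c₁ ^ 2 ≤ c₂ ^ 2) : polarAngleIntegrand c₂ R ≤ polarAngleIntegrand c₁ R :=
  div_le_div_of_nonneg_left (K_pos hR).le (mul_pos hR (sqrt_pos.2 (sub_pos.2 hK)))
    (mul_le_mul_of_nonneg_left (sqrt_le_sqrt (by linarith)) hR.le)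

lemma inv_sqrt_sub_inv_sqrt_le {x y m s : ℝ} (hs : 0 < s) (hsm : s ^ 2 ≤ m) (hmx : m ≤ x)
    (hxy : x ≤ y) : (√x)⁻¹ - (√y)⁻¹ ≤ (y - x) / (2 * m * s) := by
  have hm : 0 < m := (pow_pos hs 2).trans_le hsm
  have hsx : s ≤ √x := le_sqrt_of_sq_le (hsm.trans hmx)
  have hx : 0 < √x := hs.trans_le hsx
  have hxy' : √x ≤ √y := sqrt_le_sqrt hxy
  have hy : 0 < √y := hx.trans_le hxy'
  have hdiff : √y - √x ≤ (y - x) / (2 * s) := by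
    rw [le_div_iff₀ (by positivity)]
    nlinarith [sq_sqrt (hm.le.trans hmx), sq_sqrt (hm.le.trans (hmx.trans hxy)),
      mul_le_mul_of_nonneg_left (by linarith : 2 * s ≤ √y + √x) (sub_nonneg.2 hxy')]
  have hprod : m ≤ √x * √y := by nlinarith [sq_sqrt (hm.le.trans hmx)]
  calc (√x)⁻¹ - (√y)⁻¹ = (√y - √x) / (√x * √y) := by field_simp
    _ ≤ (y - x) / (2 * s) / m := by gcongr
    _ = (y - x) / (2 * m * s) := by ring

lemma polarAngleIntegrand_sub_le {c₁ c₂ R p Km m s : ℝ} (hp : 0 < p) (hpR : p ≤ R)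
    (hK : K R ≤ Km) (hs : 0 < s) (hsm : s ^ 2 ≤ m - Km ^ 2) (hmc : m ≤ c₁ ^ 2)
    (hc : c₁ ^ 2 ≤ c₂ ^ 2) :
    polarAngleIntegrand c₁ R - polarAngleIntegrand c₂ R
      ≤ Km / p * ((c₂ ^ 2 - c₁ ^ 2) / (2 * (m - Km ^ 2) * s)) := by
  have hR : 0 < R := hp.trans_le hpR
  have hKR := K_pos hR
  have hKsq : K R ^ 2 ≤ Km ^ 2 := pow_le_pow_left₀ hKR.le hK 2
  have hpos : 0 < c₁ ^ 2 - K R ^ 2 := by nlinarith [pow_pos hs 2]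
  have key := inv_sqrt_sub_inv_sqrt_le (x := c₁ ^ 2 - K R ^ 2) (y := c₂ ^ 2 - K R ^ 2) hs hsm
    (by linarith) (by linarith)
  rw [sub_sub_sub_cancel_right] at key
  have hfac : ∀ c, polarAngleIntegrand c R = K R / R * (√(c ^ 2 - K R ^ 2))⁻¹ := fun c => by
    rw [polarAngleIntegrand, div_mul_eq_div_div, div_eq_mul_inv]
  rw [hfac, hfac, ← mul_sub]
  exact mul_le_mul (div_le_div₀ (hKR.le.trans hK) hK hp hpR) key
    (sub_nonneg.2 (inv_anti₀ (sqrt_pos.2 hpos) (sqrt_le_sqrt (by linarith))))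
    (div_nonneg (hKR.le.trans hK) hp.le)

lemma le_polarAngleIntegrand {c R : ℝ} (hR : 0 < R) (hR' : R ≤ 1.105) (hK : 1 ≤ K R)
    (hKc : K R < c) (hc : c ^ 2 ≤ 1.35874) : 1.51 ≤ polarAngleIntegrand c R := by
  have hpos : 0 < c ^ 2 - K R ^ 2 := by nlinarith
  have hsqrt : √(c ^ 2 - K R ^ 2) ≤ 0.59896 := sqrt_le_iff.2 ⟨by norm_num, by nlinarith⟩
  rw [polarAngleIntegrand, le_div_iff₀ (mul_pos hR (sqrt_pos.2 hpos))]
  nlinarith [mul_le_mul hR' hsqrt (sqrt_nonneg _) (by norm_num : (0 : ℝ) ≤ 1.105)]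

lemma K_le_of_mem_Icc {R : ℝ} (hR : R ∈ Icc (0.7 : ℝ) 1.105) : K R ≤ 1.10719 := by
  rcases le_total R 1 with h | h
  · calc K R ≤ K 0.7 := strictAntiOn_K.antitoneOn ⟨by norm_num, by norm_num⟩
          ⟨by linarith [hR.1], h⟩ hR.1
      _ ≤ 1.10719 := K_le_of_le_one (by norm_num) (by norm_num) (by norm_num)
  · calc K R ≤ K 1.105 := strictMonoOn_K.monotoneOn h (by norm_num) hR.2
      _ ≤ 1.01742 := K_le_of_one_le (by norm_num) (by norm_num) (by norm_num)
      _ ≤ 1.10719 := by norm_num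

lemma K_sub_le {a b : ℝ} (ha : 1 ≤ a) (hab : a ≤ b) (hb : b ≤ 1.105) :
    K b - K a ≤ 0.20351 * (b - a) := by
  refine (convex_Icc 1 1.105).image_sub_le_mul_sub_of_deriv_le
    (continuousOn_K fun R hR => (zero_lt_one.trans_le hR.1).ne')
    (fun R hR => (hasDerivAt_K (zero_lt_one.trans_le (interior_subset hR).1).ne').differentiableAt
      |>.differentiableWithinAt)
    (fun R hR => ?_) a ⟨ha, hab.trans hb⟩ b ⟨ha.trans hab, hb⟩ hab
  rw [interior_Icc] at hR
  obtain ⟨hR1, hR2⟩ := hR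
  have hR0 : 0 < R := zero_lt_one.trans hR1
  rw [(hasDerivAt_K hR0.ne').deriv]
  have hK : K R ≤ 1.01742 := (strictMonoOn_K.monotoneOn hR1.le (by norm_num) hR2.le).trans
    (K_le_of_one_le (by norm_num) (by norm_num) (by norm_num))
  have hfrac : (R ^ 2 - 1) / R ≤ 0.200023 := by
    rw [div_le_iff₀ hR0]; nlinarith
  nlinarith [mul_le_mul hK hfrac (div_nonneg (by nlinarith) hR0.le) (by norm_num), K_pos hR0]

lemma K_sq_lt_of_mem_Icc {c R : ℝ} (hc : 4 / 3 ≤ c ^ 2) (hR : R ∈ Icc (0.7 : ℝ) 1.105) :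
    K R ^ 2 < c ^ 2 := by
  nlinarith [K_le_of_mem_Icc hR, K_pos (by linarith [hR.1] : (0 : ℝ) < R)]

open MeasureTheory intervalIntegral

lemma intervalIntegrable_polarAngleIntegrand {c u v : ℝ} (hc : 4 / 3 ≤ c ^ 2)
    (hu : u ∈ Icc (0.7 : ℝ) 1.105) (hv : v ∈ Icc (0.7 : ℝ) 1.105) :
    IntervalIntegrable (polarAngleIntegrand c) volume u v := by
  refine ((continuousOn_polarAngleIntegrand fun R hR => ⟨?_, K_sq_lt_of_mem_Icc hc hR⟩).mono
    (uIcc_subset_Icc hu hv)).intervalIntegrable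
  linarith [hR.1]

lemma intervalIntegrable_polarAngleIntegrand_sub {c₁ c₂ u v : ℝ} (hc₁ : 4 / 3 ≤ c₁ ^ 2)
    (hc : c₁ ^ 2 ≤ c₂ ^ 2) (hu : u ∈ Icc (0.7 : ℝ) 1.105)
    (hv : v ∈ Icc (0.7 : ℝ) 1.105) :
    IntervalIntegrable (fun R => polarAngleIntegrand c₁ R - polarAngleIntegrand c₂ R)
      volume u v :=
  (intervalIntegrable_polarAngleIntegrand hc₁ hu hv).sub
    (intervalIntegrable_polarAngleIntegrand (hc₁.trans hc) hu hv)

lemma integral_polarAngleIntegrand_sub_le_of_K_le {c₁ c₂ p q Km s : ℝ}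
    (hc₁ : 4 / 3 ≤ c₁ ^ 2) (hc : c₁ ^ 2 ≤ c₂ ^ 2) (hp : 0.7 ≤ p) (hpq : p ≤ q) (hq : q ≤ 1.105)
    (hK : ∀ R ∈ Icc p q, K R ≤ Km) (hs : 0 < s) (hsm : s ^ 2 ≤ 4 / 3 - Km ^ 2) :
    ∫ R in p..q, (polarAngleIntegrand c₁ R - polarAngleIntegrand c₂ R)
      ≤ (q - p) * (Km / p * ((c₂ ^ 2 - c₁ ^ 2) / (2 * (4 / 3 - Km ^ 2) * s))) := by
  have h := integral_mono_on hpq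
    (intervalIntegrable_polarAngleIntegrand_sub hc₁ hc ⟨hp, hpq.trans hq⟩ ⟨hp.trans hpq, hq⟩)
    intervalIntegrable_const fun R hR =>
      polarAngleIntegrand_sub_le (by linarith) hR.1 (hK R hR) hs hsm hc₁ hc
  rwa [intervalIntegral.integral_const, smul_eq_mul] at h

lemma integral_polarAngleIntegrand_sub_le' {c₁ c₂ : ℝ} (hc₁ : 4 / 3 ≤ c₁ ^ 2)
    (hc : c₁ ^ 2 ≤ c₂ ^ 2) :
    ∫ R in (0.7 : ℝ)..1.105, (polarAngleIntegrand c₁ R - polarAngleIntegrand c₂ R)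
      ≤ 2.5909 * (c₂ ^ 2 - c₁ ^ 2) := by
  have hK : ∀ p q B : ℝ, 0.7 ≤ p → q ≤ 1 →
      1 ≤ B * p * (1 + (1 - p ^ 2) / 2 + ((1 - p ^ 2) / 2) ^ 2 / 2 + ((1 - p ^ 2) / 2) ^ 3 / 6) →
      ∀ R ∈ Icc p q, K R ≤ B := fun p q B hp hq hB R hR =>
    (strictAntiOn_K.antitoneOn ⟨by linarith, by linarith [hR.1, hR.2]⟩
      ⟨by linarith [hR.1], hR.2.trans hq⟩ hR.1).trans
      (K_le_of_le_one (by linarith) (by linarith [hR.1, hR.2]) hB)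
  -- On each piece `K ≤ Km`, and `s` is a rational lower bound for `√(4/3 - Km²)`.
  have piece := fun p q Km s => integral_polarAngleIntegrand_sub_le_of_K_le hc₁ hc
    (p := p) (q := q) (Km := Km) (s := s)
  have h₁ := piece 0.7 0.74 1.10719 0.32781 (by norm_num) (by norm_num) (by norm_num)
    (hK _ _ _ (by norm_num) (by norm_num) (by norm_num)) (by norm_num) (by norm_num)
  have h₂ := piece 0.74 0.78 1.07789 0.4141 (by norm_num) (by norm_num) (by norm_num)
    (hK _ _ _ (by norm_num) (by norm_num) (by norm_num)) (by norm_num) (by norm_num)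
  have h₃ := piece 0.78 0.83 1.05413 0.47132 (by norm_num) (by norm_num) (by norm_num)
    (hK _ _ _ (by norm_num) (by norm_num) (by norm_num)) (by norm_num) (by norm_num)
  have h₄ := piece 0.83 0.9 1.03129 0.51939 (by norm_num) (by norm_num) (by norm_num)
    (hK _ _ _ (by norm_num) (by norm_num) (by norm_num)) (by norm_num) (by norm_num)
  have h₅ := piece 0.9 1 1.01042 0.55891 (by norm_num) (by norm_num) (by norm_num)
    (hK _ _ _ (by norm_num) (by norm_num) (by norm_num)) (by norm_num) (by norm_num)
  have h₆ := piece 1 1.105 1.01742 0.54606 (by norm_num) (by norm_num) le_rfl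
    (fun R hR => (strictMonoOn_K.monotoneOn hR.1 (by norm_num) hR.2).trans
      (K_le_of_one_le (by norm_num) (by norm_num) (by norm_num)))
    (by norm_num) (by norm_num)
  have split : ∀ u v w : ℝ, u ∈ Icc (0.7 : ℝ) 1.105 → v ∈ Icc (0.7 : ℝ) 1.105 →
      w ∈ Icc (0.7 : ℝ) 1.105 →
        ∫ R in u..w, (polarAngleIntegrand c₁ R - polarAngleIntegrand c₂ R) =
          (∫ R in u..v, (polarAngleIntegrand c₁ R - polarAngleIntegrand c₂ R))
          + ∫ R in v..w, (polarAngleIntegrand c₁ R - polarAngleIntegrand c₂ R) :=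
    fun u v w hu hv hw => (integral_add_adjacent_intervals
      (intervalIntegrable_polarAngleIntegrand_sub hc₁ hc hu hv)
      (intervalIntegrable_polarAngleIntegrand_sub hc₁ hc hv hw)).symm
  rw [split 0.7 0.74 1.105 (by norm_num) (by norm_num) (by norm_num),
    split 0.74 0.78 1.105 (by norm_num) (by norm_num) (by norm_num),
    split 0.78 0.83 1.105 (by norm_num) (by norm_num) (by norm_num),
    split 0.83 0.9 1.105 (by norm_num) (by norm_num) (by norm_num),
    split 0.9 1 1.105 (by norm_num) (by norm_num) (by norm_num)]
  have hc' : 0 ≤ c₂ ^ 2 - c₁ ^ 2 := sub_nonneg.2 hc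
  norm_num at h₁ h₂ h₃ h₄ h₅ h₆
  linarith

lemma integral_polarAngleIntegrand_sub_le {c₁ c₂ R₀ a : ℝ} (hc₁ : 4 / 3 ≤ c₁ ^ 2)
    (hc : c₁ ^ 2 ≤ c₂ ^ 2) (hR₀ : 0.7 ≤ R₀) (hR₀a : R₀ ≤ a) (ha : a ≤ 1.105) :
    ∫ R in R₀..a, (polarAngleIntegrand c₁ R - polarAngleIntegrand c₂ R)
      ≤ 2.5909 * (c₂ ^ 2 - c₁ ^ 2) := by
  refine (integral_mono_interval hR₀ hR₀a ha ?_
    (intervalIntegrable_polarAngleIntegrand_sub hc₁ hc (by norm_num) (by norm_num))).trans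
    (integral_polarAngleIntegrand_sub_le' hc₁ hc)
  refine (ae_restrict_mem measurableSet_Ioc).mono fun R hR => sub_nonneg.2 ?_
  exact polarAngleIntegrand_antitone (by linarith [hR.1])
    (K_sq_lt_of_mem_Icc hc₁ (Ioc_subset_Icc_self hR)) hc

lemma integral_polarAngleIntegrand_ge {a b c : ℝ} (ha : 1 ≤ a) (hab : a ≤ b) (hb : b ≤ 1.105)
    (hKb : K b < c) (hc : c ^ 2 ≤ 1.35874) :
    1.51 * (b - a) ≤ ∫ R in a..b, polarAngleIntegrand c R := by
  have hK : ∀ R ∈ Icc a b, 1 ≤ K R ∧ K R < c := fun R hR =>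
    ⟨one_le_K_of_one_le (ha.trans hR.1),
      (strictMonoOn_K.monotoneOn (ha.trans hR.1) (ha.trans hab) hR.2).trans_lt hKb⟩
  have hint : IntervalIntegrable (polarAngleIntegrand c) volume a b :=
    (continuousOn_polarAngleIntegrand fun R hR => ⟨by linarith [hR.1], by
      nlinarith [hK R (uIcc_of_le hab ▸ hR)]⟩).intervalIntegrable_of_Icc hab
  have h := integral_mono_on hab intervalIntegrable_const hint fun R hR =>
    le_polarAngleIntegrand (by linarith [hR.1]) (hR.2.trans hb) (hK R hR).1 (hK R hR).2 hc
  rwa [intervalIntegral.integral_const, smul_eq_mul, mul_comm] at h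

lemma integral_polarAngleIntegrand_lt {R₀ a b c₁ c₂ : ℝ} (hR₀ : 0.7 ≤ R₀) (hR₀a : R₀ ≤ a)
    (ha : 1 ≤ a) (hab : a < b) (hb : b ≤ 1.105) (hKa : K a = √3 / 2 * c₁)
    (hKb : K b = √3 / 2 * c₂) (hc₂ : c₂ ≤ 1.16563) :
    ∫ R in R₀..a, polarAngleIntegrand c₁ R < ∫ R in R₀..b, polarAngleIntegrand c₂ R := by
  have h3 : √3 ^ 2 = 3 := sq_sqrt (by norm_num)
  have h3l : (1.7320508 : ℝ) ≤ √3 := le_sqrt_of_sq_le (by norm_num)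
  have h3u : √3 ≤ 1.7320509 := sqrt_le_iff.2 ⟨by norm_num, by norm_num⟩
  have hKa1 := one_le_K_of_one_le ha
  have hKab : K a < K b := strictMonoOn_K ha (ha.trans hab.le) hab
  have hc₁ : 4 / 3 ≤ c₁ ^ 2 := by nlinarith
  have hc₁₂ : c₁ < c₂ := by nlinarith
  have hc₂sq : c₂ ^ 2 ≤ 1.35874 := by nlinarith
  have hc : c₁ ^ 2 ≤ c₂ ^ 2 := by nlinarith
  have hR₀m : R₀ ∈ Icc (0.7 : ℝ) 1.105 := ⟨hR₀, by linarith⟩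
  have ham : a ∈ Icc (0.7 : ℝ) 1.105 := ⟨by linarith, by linarith⟩
  have hbm : b ∈ Icc (0.7 : ℝ) 1.105 := ⟨by linarith, hb⟩
  have hgain := integral_polarAngleIntegrand_ge ha hab.le hb (by nlinarith) hc₂sq
  have hloss := integral_polarAngleIntegrand_sub_le hc₁ hc hR₀ hR₀a ham.2
  have hsplit := integral_add_adjacent_intervals
    (intervalIntegrable_polarAngleIntegrand (hc₁.trans hc) hR₀m ham)
    (intervalIntegrable_polarAngleIntegrand (hc₁.trans hc) ham hbm)
  rw [integral_sub (intervalIntegrable_polarAngleIntegrand hc₁ hR₀m ham)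
    (intervalIntegrable_polarAngleIntegrand (hc₁.trans hc) hR₀m ham)] at hloss
  have hlip : 1.7320508 / 2 * (c₂ - c₁) ≤ 0.20351 * (b - a) := by
    nlinarith [K_sub_le ha hab.le hb]
  have hsq : c₂ ^ 2 - c₁ ^ 2 ≤ 2.33126 * (c₂ - c₁) := by nlinarith
  linarith

lemma exp_0_15325_le : exp 0.15325 ≤ 1.16563 := by
  have h := exp_bound' (x := 0.15325) (by norm_num) (by norm_num) (n := 4) (by norm_num)
  norm_num [Finset.sum_range_succ, Nat.factorial] at h
  linarith

lemma Rp_mem_Icc_and_K_Rp {Rp : ℝ → ℝ} (hRp : ∀ x : ℝ, 1 < x → 1 < Rp x ∧ K (Rp x) = x)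
    (hRp1 : Rp 1 = 1) {c : ℝ} (hc : c ∈ Icc (2 / √3) (exp 0.15325)) :
    Rp (√3 / 2 * c) ∈ Icc (1 : ℝ) 1.105 ∧ K (Rp (√3 / 2 * c)) = √3 / 2 * c := by
  have h3 : √3 ^ 2 = 3 := sq_sqrt (by norm_num)
  have h3u : √3 ≤ 1.7320509 := sqrt_le_iff.2 ⟨by norm_num, by norm_num⟩
  have hx : 1 ≤ √3 / 2 * c := by
    have := hc.1
    rw [div_le_iff₀ (by positivity)] at this
    linarith
  have hspec : 1 ≤ Rp (√3 / 2 * c) ∧ K (Rp (√3 / 2 * c)) = √3 / 2 * c := by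
    rcases hx.eq_or_lt with h | h
    · rw [← h, hRp1, K_one]
      exact ⟨le_rfl, rfl⟩
    · exact (hRp _ h).imp_left le_of_lt
  refine ⟨⟨hspec.1, ?_⟩, hspec.2⟩
  by_contra! h
  have hK := strictMonoOn_K (by norm_num) hspec.1 h
  rw [hspec.2] at hK
  nlinarith [le_K_of_one_le (L := 1.0106) (q := 1.105) (by norm_num) (by norm_num),
    hc.2.trans exp_0_15325_le, sqrt_nonneg 3]

theorem stmt_13 (Rp : ℝ → ℝ)
    (hRp : ∀ x : ℝ, 1 < x → 1 < Rp x ∧ K (Rp x) = x) (hRp1 : Rp 1 = 1)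
    (R₀ : ℝ) (hR₀ : 0.7 ≤ R₀) (hR₀' : R₀ ≤ 1) :
    StrictMonoOn
      (fun c : ℝ => ∫ R in R₀..(Rp (Real.sqrt 3 / 2 * c)),
        K R / (R * Real.sqrt (c ^ 2 - (K R) ^ 2)))
      (Set.Icc (2 / Real.sqrt 3) (Real.exp 0.15325)) := by
  intro c₁ hc₁ c₂ hc₂ hc
  obtain ⟨ha, hKa⟩ := Rp_mem_Icc_and_K_Rp hRp hRp1 hc₁
  obtain ⟨hb, hKb⟩ := Rp_mem_Icc_and_K_Rp hRp hRp1 hc₂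
  have hab : Rp (√3 / 2 * c₁) < Rp (√3 / 2 * c₂) := by
    rw [← strictMonoOn_K.lt_iff_lt ha.1 hb.1, hKa, hKb]
    gcongr
  exact integral_polarAngleIntegrand_lt hR₀ (hR₀'.trans ha.1) ha.1 hab hb.2 hKa hKb
    (hc₂.2.trans exp_0_15325_le)
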